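/- Let X be a Banach space with the slice diameter two property (every slice of B_X has diameter 2), and suppose there exists a norm-one linear continuous projection π : X → Y onto a closed subspace Y such that ker(π) is finite-dimensional. Then Y has the slice diameter two property: every slice of B_Y has diameter 2. -/

import Mathlib

/-!
For `x` in the slice of `B_X` given by `g ∘ π`, the point `π x` lies in the slice of `B_Y` given
by `g`, and `‖π x - π y‖ ≥ ‖x - y‖ - ‖ρ x - ρ y‖`, where `ρ = id - π` takes values in the
finite-dimensional kernel. So it suffices to find, in every slice of `B_X`, two points at distance
almost `2` whose images under the finite-rank operator `ρ` almost agree; the slice-D2P provides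
them inside a subslice on which `ρ` has small oscillation.

Such a subslice exists for every bounded operator `v` into a Hilbert space. The supremum `r β` of
`‖v x‖²` over the slice at level `β` is monotone and bounded, so along a geometric sequence of
levels it eventually hardly changes between `β q` and `β`. If `z` nearly attains `r (β q)`, then
on the slice of `f + t ⟪v z, v ·⟫` at level `β q` the value `⟪v z, v x⟫` is close to `‖v z‖²`
while `‖v x‖² ≤ r β ≈ ‖v z‖²`, which forces `v x ≈ v z`.
-/

open Metric Set

section Slice

variable {X : Type*} [NormedAddCommGroup X] [NormedSpace ℝ X]

def slice (f : X →L[ℝ] ℝ) (α : ℝ) : Set X := {x ∈ closedBall (0 : X) 1 | ‖f‖ - α < f x}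

variable {f : X →L[ℝ] ℝ} {α β : ℝ}

theorem apply_le_norm_of_mem_closedBall {x : X} (hx : x ∈ closedBall (0 : X) 1) : f x ≤ ‖f‖ :=
  (le_abs_self _).trans <| f.unit_le_opNorm x (mem_closedBall_zero_iff.mp hx)

theorem slice_subset_closedBall : slice f α ⊆ closedBall 0 1 := fun _ hx => hx.1

theorem slice_mono (h : α ≤ β) : slice f α ⊆ slice f β :=
  fun _ ⟨hx, hfx⟩ => ⟨hx, by linarith⟩

theorem slice_nonempty (hα : 0 < α) : (slice f α).Nonempty := by
  obtain ⟨x, hx, hfx⟩ := f.exists_lt_apply_of_lt_opNorm (sub_lt_self ‖f‖ hα)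
  rcases le_or_gt 0 (f x) with h | h
  · exact ⟨x, mem_closedBall_zero_iff.mpr hx.le, by rwa [Real.norm_of_nonneg h] at hfx⟩
  · refine ⟨-x, mem_closedBall_zero_iff.mpr (by simpa using hx.le), ?_⟩
    rwa [map_neg, ← Real.norm_of_nonpos h.le]

theorem diam_slice_eq_two_iff :
    diam (slice f α) = 2 ↔ ∀ ε > 0, ∃ x ∈ slice f α, ∃ y ∈ slice f α, 2 - ε < ‖x - y‖ := by
  have hbdd : Bornology.IsBounded (slice f α) := isBounded_closedBall.subset slice_subset_closedBall
  constructor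
  · intro h ε hε
    by_contra! hfar
    have hne : (slice f α).Nonempty := nonempty_iff_ne_empty.mpr fun he => by simp [he] at h
    have := diam_le_of_forall_dist_le_of_nonempty hne fun x hx y hy => by
      rw [dist_eq_norm]; exact hfar x hx y hy
    linarith
  · intro h
    refine le_antisymm ?_ (le_of_forall_pos_le_add fun ε hε => ?_)
    · calc diam (slice f α) ≤ diam (closedBall (0 : X) 1) :=
            diam_mono slice_subset_closedBall isBounded_closedBall
        _ ≤ 2 := by simpa using diam_closedBall (x := (0 : X)) zero_le_one
    · obtain ⟨x, hx, y, hy, hxy⟩ := h ε hε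
      have := dist_le_diam_of_mem hbdd hx hy
      rw [dist_eq_norm] at this
      linarith

end Slice

def HasSliceDiamTwo (X : Type*) [NormedAddCommGroup X] [NormedSpace ℝ X] : Prop :=
  ∀ f : X →L[ℝ] ℝ, f ≠ 0 → ∀ α > 0, diam (slice f α) = 2

theorem exists_apply_le_apply_succ_add {a : ℕ → ℝ} {m ν : ℝ} (hm : ∀ n, m ≤ a n) (hν : 0 < ν) :
    ∃ n, a n ≤ a (n + 1) + ν := by
  by_contra! h
  have hdrop : ∀ n : ℕ, a n ≤ a 0 - n * ν := by
    intro n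
    induction n with
    | zero => simp
    | succ k ih => push_cast; linarith [h k]
  obtain ⟨n, hn⟩ := exists_nat_gt ((a 0 - m) / ν)
  rw [div_lt_iff₀ hν] at hn
  linarith [hdrop n, hm n]

section SupSq

variable {X K : Type*} [NormedAddCommGroup X] [NormedSpace ℝ X] [NormedAddCommGroup K]
  [NormedSpace ℝ K] (v : X →L[ℝ] K) (f : X →L[ℝ] ℝ) {β : ℝ}

noncomputable def sliceSupSq (β : ℝ) : ℝ := sSup ((fun x => ‖v x‖ ^ 2) '' slice f β)

theorem norm_apply_sq_le_sliceSupSq {x : X} (hx : x ∈ slice f β) :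
    ‖v x‖ ^ 2 ≤ sliceSupSq v f β := by
  refine le_csSup ⟨‖v‖ ^ 2, ?_⟩ ⟨x, hx, rfl⟩
  rintro _ ⟨y, hy, rfl⟩
  exact pow_le_pow_left₀ (norm_nonneg _) (v.unit_le_opNorm y (mem_closedBall_zero_iff.mp hy.1)) 2

theorem sliceSupSq_nonneg : 0 ≤ sliceSupSq v f β :=
  Real.sSup_nonneg <| by rintro _ ⟨x, -, rfl⟩; positivity

theorem exists_mem_slice_lt_norm_apply_sq (hβ : 0 < β) {a : ℝ} (ha : a < sliceSupSq v f β) :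
    ∃ x ∈ slice f β, a < ‖v x‖ ^ 2 := by
  obtain ⟨_, ⟨x, hx, rfl⟩, hax⟩ := exists_lt_of_lt_csSup ((slice_nonempty hβ).image _) ha
  exact ⟨x, hx, hax⟩

end SupSq

section InnerProduct

variable {X K : Type*} [NormedAddCommGroup X] [NormedSpace ℝ X] [NormedAddCommGroup K]
  [InnerProductSpace ℝ K] (v : X →L[ℝ] K) (f : X →L[ℝ] ℝ)

theorem mem_slice_and_norm_sub_sq_lt_of_mem_slice_add {β₁ β₂ t ν : ℝ} (ht : 0 < t)
    (hβ : 2 * β₁ + t * ‖v‖ ^ 2 ≤ β₂) (hr : sliceSupSq v f β₂ ≤ sliceSupSq v f β₁ + ν)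
    {z : X} (hz : z ∈ slice f β₁) (hzr : sliceSupSq v f β₁ - ν < ‖v z‖ ^ 2) {x : X}
    (hx : x ∈ slice (f + t • (innerSL ℝ (v z)).comp v) β₁) :
    x ∈ slice f β₂ ∧ ‖v x - v z‖ ^ 2 < 2 * ν + 4 * β₁ / t := by
  set h := f + t • (innerSL ℝ (v z)).comp v
  have happly (y : X) : h y = f y + t * inner ℝ (v z) (v y) := by simp [h]
  have hhz : f z + t * ‖v z‖ ^ 2 ≤ ‖h‖ := by
    simpa [happly, real_inner_self_eq_norm_sq] using apply_le_norm_of_mem_closedBall (f := h) hz.1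
  have hsum : ‖f‖ - 2 * β₁ + t * ‖v z‖ ^ 2 < f x + t * inner ℝ (v z) (v x) := by
    have hxh := hx.2
    rw [happly] at hxh
    linarith [hz.2]
  have hfx : f x ≤ ‖f‖ := apply_le_norm_of_mem_closedBall hx.1
  have hinner : inner ℝ (v z) (v x) ≤ ‖v‖ ^ 2 := by
    calc inner ℝ (v z) (v x) ≤ ‖v z‖ * ‖v x‖ := real_inner_le_norm _ _
      _ ≤ ‖v‖ * ‖v‖ := by
        gcongr
        exacts [v.unit_le_opNorm z (mem_closedBall_zero_iff.mp hz.1),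
          v.unit_le_opNorm x (mem_closedBall_zero_iff.mp hx.1)]
      _ = ‖v‖ ^ 2 := (sq _).symm
  have hmem : x ∈ slice f β₂ := ⟨hx.1, by nlinarith [mul_le_mul_of_nonneg_left hinner ht.le]⟩
  refine ⟨hmem, ?_⟩
  have hgap : ‖v z‖ ^ 2 - inner ℝ (v z) (v x) < 2 * β₁ / t := by
    rw [lt_div_iff₀ ht]
    linarith
  have hvx : ‖v x‖ ^ 2 ≤ sliceSupSq v f β₂ := norm_apply_sq_le_sliceSupSq v f hmem
  rw [norm_sub_sq_real, real_inner_comm]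
  have : 4 * β₁ / t = 2 * (2 * β₁ / t) := by ring
  linarith

theorem exists_slice_subset_forall_norm_sub_lt {f : X →L[ℝ] ℝ} (hf : f ≠ 0) {α δ : ℝ}
    (hα : 0 < α) (hδ : 0 < δ) :
    ∃ h : X →L[ℝ] ℝ, h ≠ 0 ∧ ∃ β > 0, slice h β ⊆ slice f α ∧
      ∀ x ∈ slice h β, ∀ y ∈ slice h β, ‖v x - v y‖ < δ := by
  set τ := (δ / 2) ^ 2
  set q := τ / (2 * τ + 8 * ‖v‖ ^ 2)
  set β₀ := min α ‖f‖
  have hτ : 0 < τ := by positivity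
  have hq : 0 < q := by positivity
  have hq1 : q ≤ 1 := div_le_one_of_le₀ (by nlinarith [sq_nonneg ‖v‖]) (by positivity)
  have hβ₀ : 0 < β₀ := lt_min hα (norm_pos_iff.mpr hf)
  set β : ℕ → ℝ := fun n => β₀ * q ^ n
  have hβ (n : ℕ) : 0 < β n := by positivity
  have hβ_le (n : ℕ) : β n ≤ β₀ := mul_le_of_le_one_right hβ₀.le (pow_le_one₀ hq.le hq1)
  obtain ⟨n, hn⟩ := exists_apply_le_apply_succ_add (a := fun n => sliceSupSq v f (β n))
    (fun _ => sliceSupSq_nonneg v f) (by positivity : 0 < τ / 4)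
  obtain ⟨z, hz, hzr⟩ :=
    exists_mem_slice_lt_norm_apply_sq v f (hβ (n + 1)) (sub_lt_self _ (by positivity : 0 < τ / 4))
  set t := 8 * β (n + 1) / τ
  have ht : 0 < t := by positivity
  have hstep : 2 * β (n + 1) + t * ‖v‖ ^ 2 = β n := by
    simp only [t, β, q, pow_succ]
    field_simp
  set h := f + t • (innerSL ℝ (v z)).comp v
  have hsub {x : X} (hx : x ∈ slice h (β (n + 1))) :=
    mem_slice_and_norm_sub_sq_lt_of_mem_slice_add v f ht hstep.le hn hz hzr hx
  refine ⟨h, fun h0 => ?_, β (n + 1), hβ _,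
    fun x hx => slice_mono ((hβ_le n).trans (min_le_left _ _)) (hsub hx).1, fun x hx y hy => ?_⟩
  · have hz0 : h z = f z + t * ‖v z‖ ^ 2 := by simp [h]
    rw [h0, zero_apply] at hz0
    have : β (n + 1) ≤ ‖f‖ := (hβ_le _).trans (min_le_right _ _)
    nlinarith [hz.2, sq_nonneg ‖v z‖]
  · have hnear {w : X} (hw : w ∈ slice h (β (n + 1))) : ‖v w - v z‖ < δ / 2 := by
      refine lt_of_pow_lt_pow_left₀ 2 (by positivity) ((hsub hw).2.trans_le (le_of_eq ?_))
      have := (hβ (n + 1)).ne'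
      simp only [t, τ]
      field_simp
      ring
    calc ‖v x - v y‖ ≤ ‖v x - v z‖ + ‖v z - v y‖ := norm_sub_le_norm_sub_add_norm_sub _ _ _
      _ < δ / 2 + δ / 2 := by rw [norm_sub_rev (v z)]; exact add_lt_add (hnear hx) (hnear hy)
      _ = δ := add_halves δ

end InnerProduct

section FiniteDimensional

variable {X E : Type*} [NormedAddCommGroup X] [NormedSpace ℝ X] [NormedAddCommGroup E]
  [NormedSpace ℝ E] [FiniteDimensional ℝ E]

theorem exists_slice_subset_forall_norm_sub_lt_of_finiteDimensional (v : X →L[ℝ] E)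
    {f : X →L[ℝ] ℝ} (hf : f ≠ 0) {α δ : ℝ} (hα : 0 < α) (hδ : 0 < δ) :
    ∃ h : X →L[ℝ] ℝ, h ≠ 0 ∧ ∃ β > 0, slice h β ⊆ slice f α ∧
      ∀ x ∈ slice h β, ∀ y ∈ slice h β, ‖v x - v y‖ < δ := by
  let e := toEuclidean (E := E)
  obtain ⟨δ', hδ', he⟩ :=
    Metric.uniformContinuous_iff.mp e.symm.toContinuousLinearMap.uniformContinuous δ hδ
  obtain ⟨h, hh, β, hβ, hsub, hosc⟩ :=
    exists_slice_subset_forall_norm_sub_lt (e.toContinuousLinearMap.comp v) hf hα hδ'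
  refine ⟨h, hh, β, hβ, hsub, fun x hx y hy => ?_⟩
  simpa [dist_eq_norm] using he (a := e (v x)) (b := e (v y)) (by
    simpa [dist_eq_norm] using hosc x hx y hy)

theorem HasSliceDiamTwo.exists_mem_slice_lt_norm_sub (hX : HasSliceDiamTwo X) (v : X →L[ℝ] E)
    {f : X →L[ℝ] ℝ} (hf : f ≠ 0) {α ε : ℝ} (hα : 0 < α) (hε : 0 < ε) :
    ∃ x ∈ slice f α, ∃ y ∈ slice f α, 2 - ε < ‖x - y‖ ∧ ‖v x - v y‖ < ε := by
  obtain ⟨h, hh, β, hβ, hsub, hosc⟩ :=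
    exists_slice_subset_forall_norm_sub_lt_of_finiteDimensional v hf hα hε
  obtain ⟨x, hx, y, hy, hxy⟩ := diam_slice_eq_two_iff.mp (hX h hh β hβ) ε hε
  exact ⟨x, hsub hx, y, hsub hy, hxy, hosc x hx y hy⟩

end FiniteDimensional

section Projection

variable {X : Type*} [NormedAddCommGroup X] [NormedSpace ℝ X]

theorem mapsTo_slice_comp {Y : Type*} [NormedAddCommGroup Y] [NormedSpace ℝ Y] {π : X →L[ℝ] Y}
    (hπ : ‖π‖ ≤ 1) {g : Y →L[ℝ] ℝ} (hg : ‖g‖ ≤ ‖g.comp π‖) (α : ℝ) :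
    MapsTo π (slice (g.comp π) α) (slice g α) := fun x ⟨hx, hgx⟩ =>
  ⟨mem_closedBall_zero_iff.mpr ((π.le_of_opNorm_le hπ x).trans (by simpa using hx)),
    by rw [ContinuousLinearMap.comp_apply] at hgx; linarith⟩

variable {Y : Subspace ℝ X} {π : X →L[ℝ] Y}

theorem norm_le_norm_comp_of_apply_coe (hproj : ∀ y : Y, π y = y) (g : Y →L[ℝ] ℝ) :
    ‖g‖ ≤ ‖g.comp π‖ :=
  g.opNorm_le_bound (norm_nonneg _) fun y => by simpa [hproj] using (g.comp π).le_opNorm y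

theorem exists_coe_eq_sub_apply_coe (hproj : ∀ y : Y, π y = y) :
    ∃ ρ : X →L[ℝ] LinearMap.ker (π : X →ₗ[ℝ] Y), ∀ x, (ρ x : X) = x - π x :=
  ⟨(ContinuousLinearMap.id ℝ X - Y.subtypeL.comp π).codRestrict _ fun x => by simp [hproj],
    fun _ => rfl⟩

end Projection

theorem statement3_general {X : Type*} [NormedAddCommGroup X] [NormedSpace ℝ X]
    (hX : ∀ f : X →L[ℝ] ℝ, f ≠ 0 → ∀ α > 0,
      Metric.diam {x ∈ closedBall (0 : X) 1 | ‖f‖ - α < f x} = 2)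
    (Y : Subspace ℝ X)
    (π : X →L[ℝ] Y) (hproj : ∀ y : Y, π (y : X) = y) (hnorm : ‖π‖ = 1)
    (hker : FiniteDimensional ℝ (LinearMap.ker (π : X →ₗ[ℝ] Y))) :
    ∀ g : Y →L[ℝ] ℝ, g ≠ 0 → ∀ α > 0,
      Metric.diam {y ∈ closedBall (0 : Y) 1 | ‖g‖ - α < g y} = 2 := by
  intro g hg α hα
  refine diam_slice_eq_two_iff.mpr fun ε hε => ?_
  have hgπ : ‖g‖ ≤ ‖g.comp π‖ := norm_le_norm_comp_of_apply_coe hproj g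
  have hgπ0 : g.comp π ≠ 0 := by
    intro h
    rw [h, norm_zero] at hgπ
    exact hg (g.opNorm_zero_iff.mp (le_antisymm hgπ (norm_nonneg g)))
  obtain ⟨ρ, hρ⟩ := exists_coe_eq_sub_apply_coe hproj
  obtain ⟨x, hx, y, hy, hxy, hρxy⟩ :=
    HasSliceDiamTwo.exists_mem_slice_lt_norm_sub hX ρ hgπ0 hα (half_pos hε)
  have hmaps := mapsTo_slice_comp hnorm.le hgπ α
  refine ⟨π x, hmaps hx, π y, hmaps hy, ?_⟩
  have hdecomp : x - y = ((π x - π y : Y) : X) + ((ρ x - ρ y : _) : X) := by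
    simp only [Submodule.coe_sub, hρ]; abel
  have hle : ‖x - y‖ ≤ ‖π x - π y‖ + ‖ρ x - ρ y‖ := by
    rw [hdecomp]
    exact norm_add_le _ _
  linarith

/-- the slice diameter two property passes from `X` to a subspace `Y` which is
the range of a norm-one projection with finite-dimensional kernel. -/
theorem statement3 {X : Type*} [NormedAddCommGroup X] [NormedSpace ℝ X] [CompleteSpace X]
    (hX : ∀ f : X →L[ℝ] ℝ, f ≠ 0 → ∀ α > 0,
      Metric.diam {x ∈ closedBall (0 : X) 1 | ‖f‖ - α < f x} = 2)
    (Y : Subspace ℝ X) (hYclosed : IsClosed (Y : Set X))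
    (π : X →L[ℝ] Y) (hproj : ∀ y : Y, π (y : X) = y) (hnorm : ‖π‖ = 1)
    (hker : FiniteDimensional ℝ (LinearMap.ker (π : X →ₗ[ℝ] Y))) :
    ∀ g : Y →L[ℝ] ℝ, g ≠ 0 → ∀ α > 0,
      Metric.diam {y ∈ closedBall (0 : Y) 1 | ‖g‖ - α < g y} = 2 :=
  statement3_general hX Y π hproj hnorm hker
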